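/- arXiv:1509.09209 — 2 statements merged into one kernel-verified Lean document; each statement's English description precedes it below -/
import Mathlib

section
/- Concatenation of binary strings, realized as the operation x ⊕ y = (x+1)·Q y + R y - 1 on the natural numbers, is associative: for all natural numbers x, y, z, x ⊕ (y ⊕ z) = (x ⊕ y) ⊕ z. -/
def Q (x : ℕ) : ℕ := 2 ^ Nat.log 2 (x + 1)

def R (x : ℕ) : ℕ := (x + 1) - Q x

def cat (x y : ℕ) : ℕ := (x + 1) * Q y + R y - 1

infixl:65 " ⊙ " => cat

/-!
Shifting by one, `x ↦ x + 1` identifies a string with the number `Q x + R x` whose binary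
expansion is `1` followed by the string, where `Q x` is a power of two and `R x < Q x`.
In these coordinates concatenation is `(x ⊙ y) + 1 = (x + 1) * Q y + R y`, and the leading power
and the remainder of a concatenation are `Q (x ⊙ y) = Q x * Q y` and `R (x ⊙ y) = R x * Q y + R y`.
Both sides of the associativity law then expand to the same polynomial in `Q` and `R` of
`x`, `y`, `z`.
-/

lemma Q_pos (x : ℕ) : 0 < Q x := Nat.pow_pos two_pos

lemma Q_le_add_one (x : ℕ) : Q x ≤ x + 1 :=
  Nat.pow_log_le_self 2 x.succ_ne_zero

lemma add_one_lt_two_mul_Q (x : ℕ) : x + 1 < 2 * Q x := by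
  simpa [Q, pow_succ, mul_comm] using Nat.lt_pow_succ_log_self one_lt_two (x + 1)

lemma Q_add_R (x : ℕ) : Q x + R x = x + 1 := by
  have := Q_le_add_one x
  unfold R
  omega

lemma R_lt_Q (x : ℕ) : R x < Q x := by
  have := add_one_lt_two_mul_Q x
  have := Q_add_R x
  omega

lemma Q_eq_of_le_of_lt {x k : ℕ} (hle : 2 ^ k ≤ x + 1) (hlt : x + 1 < 2 ^ (k + 1)) :
    Q x = 2 ^ k := by
  rw [Q, Nat.log_eq_of_pow_le_of_lt_pow hle hlt]

lemma cat_add_one (x y : ℕ) : x ⊙ y + 1 = (x + 1) * Q y + R y := by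
  have : 0 < (x + 1) * Q y := Nat.mul_pos x.succ_pos (Q_pos y)
  unfold cat
  omega

lemma Q_cat (x y : ℕ) : Q (x ⊙ y) = Q x * Q y := by
  have hx : x + 1 + 1 ≤ 2 * Q x := add_one_lt_two_mul_Q x
  have hy : R y < Q y := R_lt_Q y
  have hle : Q x * Q y ≤ x ⊙ y + 1 := by
    rw [cat_add_one]
    nlinarith [Q_le_add_one x]
  have hlt : x ⊙ y + 1 < Q x * Q y * 2 := by
    rw [cat_add_one]
    nlinarith
  simp only [Q, ← pow_add, ← pow_succ] at hle hlt ⊢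
  exact Q_eq_of_le_of_lt hle hlt

lemma R_cat (x y : ℕ) : R (x ⊙ y) = R x * Q y + R y := by
  have hsplit : (x + 1) * Q y = Q x * Q y + R x * Q y := by rw [← Q_add_R x]; ring
  rw [R, Q_cat, cat_add_one, hsplit]
  omega

theorem stmt_5 (x y z : ℕ) : x ⊙ (y ⊙ z) = (x ⊙ y) ⊙ z := by
  suffices x ⊙ (y ⊙ z) + 1 = (x ⊙ y) ⊙ z + 1 by omega
  rw [cat_add_one, cat_add_one, Q_cat, R_cat, cat_add_one]
  ring
end

section
/- For every natural number x with x ≠ 0, Q(Chop x) = (Q x) / 2 and R(Chop x) = (R x) / 2, where / denotes floor division. -/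
def Chop (x : ℕ) : ℕ := (Q x / 2 + R x / 2) - 1

lemma Q_R_eq_of_add_one_eq {x k r : ℕ} (h : x + 1 = 2 ^ k + r) (hr : r < 2 ^ k) :
    Q x = 2 ^ k ∧ R x = r := by
  have hlog : Nat.log 2 (x + 1) = k := by
    refine Nat.log_eq_of_pow_le_of_lt_pow (by omega) ?_
    rw [pow_succ]
    omega
  have hQ : Q x = 2 ^ k := by rw [Q, hlog]
  refine ⟨hQ, ?_⟩
  rw [R, hQ]
  omega

lemma Q_eq_two_mul_of_ne_zero {x : ℕ} (hx : x ≠ 0) :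
    Q x = 2 * 2 ^ (Nat.log 2 (x + 1) - 1) := by
  have hlog : 0 < Nat.log 2 (x + 1) := Nat.log_pos one_lt_two (by omega)
  rw [Q, ← pow_succ', Nat.sub_add_cancel hlog]

theorem stmt_15 (x : ℕ) (hx : x ≠ 0) :
    Q (Chop x) = Q x / 2 ∧ R (Chop x) = R x / 2 := by
  set k := Nat.log 2 (x + 1) - 1
  have hQ : Q x = 2 * 2 ^ k := Q_eq_two_mul_of_ne_zero hx
  have hhalf : Q x / 2 = 2 ^ k := by omega
  have hdecomp : Chop x + 1 = 2 ^ k + R x / 2 := by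
    have := Nat.one_le_two_pow (n := k)
    rw [Chop, hhalf]
    omega
  have hr : R x / 2 < 2 ^ k := by
    have := R_lt_Q x
    omega
  rw [hhalf]
  exact Q_R_eq_of_add_one_eq hdecomp hr
end
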